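/- In the ring A = 𝔽₂[x₀]/(x₀^{n+1}) ⊗ 𝔽₂[x₁,…,x_ℓ]/(f_{n−ℓ+1},…,f_n) ⊗ 𝔽₂[u_χ^{±1} : χ ∈ G°], the element x₀^n · ∏_{i=1}^ℓ x_i^{n−i} · u_{χ₀⊗χᵢ} · u_{χᵢ}^{n−i−1} · u₀^n is nonzero. -/

import Mathlib

/-!
Over a domain a pure tensor of nonzero elements of projective modules is nonzero, so it suffices
that each factor is nonzero, and only the middle one needs an argument. Write `k = n - ℓ`; after
reversing the variables, the claim is that `∏ xᵢ ^ (k + i)` does not lie in the ideal generated by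
the `h_j`, `j > k`, in `R[x₀, …, x_{ℓ-1}]`. Split off `x₀`: then
`h_{j+1}(x₀, …) = h_{j+1}(x₁, …) + x₀ h_j(x₀, …)`, and `h_j(x₀, …)` is monic of degree `j` in `x₀`.
Modulo the ideal `(h_j(x₁, …) : j > k + 1)` every `h_j`, `j > k`, is therefore a multiple of the
monic polynomial `h_{k+1}` of degree `k + 1`, whereas the monomial becomes `x₀ ^ k` times the
image of `∏ x_{i+1} ^ (k + 1 + i)`, which is nonzero by induction on `ℓ`.
-/

open MvPolynomial TensorProduct

namespace MvPolynomial

variable {R : Type*}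

theorem multiset_prod_map_X [CommSemiring R] {σ : Type*} [DecidableEq σ] (s : Multiset σ) :
    (s.map (X : σ → MvPolynomial σ R)).prod = monomial (Multiset.toFinsupp s) 1 := by
  induction s using Multiset.induction_on with
  | empty => simp
  | cons a s ih =>
    rw [Multiset.map_cons, Multiset.prod_cons, ih, ← Multiset.singleton_add,
      Multiset.toFinsupp_add, Multiset.toFinsupp_singleton, X, monomial_mul, one_mul]

theorem coeff_hsymm [CommSemiring R] {σ : Type*} [Fintype σ] [DecidableEq σ] (j : ℕ)
    (d : σ →₀ ℕ) : coeff d (hsymm σ R j) = if d.degree = j then 1 else 0 := by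
  simp only [hsymm, multiset_prod_map_X, coeff_sum, coeff_monomial]
  split_ifs with hd
  · have hd' : (d.toMultiset).card = j := by
      rw [Finsupp.card_toMultiset, ← hd, Finsupp.degree_apply]; rfl
    rw [Finset.sum_eq_single_of_mem ⟨d.toMultiset, hd'⟩ (Finset.mem_univ _)]
    · simp
    · rintro s - hs
      refine if_neg fun hsd => hs (Subtype.ext ?_)
      simp [← hsd]
  · refine Finset.sum_eq_zero fun s _ => if_neg fun hsd => hd ?_
    rw [← hsd, Finsupp.degree_apply]
    exact (Multiset.toFinsupp_sum_eq _).trans s.2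

theorem coeff_finSuccEquiv_hsymm [CommSemiring R] (m j t : ℕ) :
    (finSuccEquiv R m (hsymm (Fin (m + 1)) R j)).coeff t =
      if t ≤ j then hsymm (Fin m) R (j - t) else 0 := by
  ext d
  rw [finSuccEquiv_coeff_coeff, coeff_hsymm, Finsupp.degree_eq_sum, Fin.sum_univ_succ]
  simp only [Finsupp.cons_zero, Finsupp.cons_succ, ← Finsupp.degree_eq_sum]
  by_cases ht : t ≤ j
  · rw [if_pos ht, coeff_hsymm]
    congr 1
    exact propext (by omega)
  · rw [if_neg ht, coeff_zero, if_neg (by omega)]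

theorem finSuccEquiv_hsymm_succ [CommSemiring R] (m j : ℕ) :
    finSuccEquiv R m (hsymm (Fin (m + 1)) R (j + 1)) =
      Polynomial.C (hsymm (Fin m) R (j + 1)) +
        Polynomial.X * finSuccEquiv R m (hsymm (Fin (m + 1)) R j) := by
  ext1 t
  rcases t with _ | t
  · simp [coeff_finSuccEquiv_hsymm]
  · simp only [Polynomial.coeff_add, Polynomial.coeff_C_succ, Polynomial.coeff_X_mul,
      coeff_finSuccEquiv_hsymm, zero_add, add_le_add_iff_right, Nat.add_sub_add_right]

theorem natDegree_finSuccEquiv_hsymm_le [CommSemiring R] (m j : ℕ) :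
    (finSuccEquiv R m (hsymm (Fin (m + 1)) R j)).natDegree ≤ j :=
  Polynomial.natDegree_le_iff_coeff_eq_zero.2 fun t ht => by
    rw [coeff_finSuccEquiv_hsymm, if_neg (by exact_mod_cast ht.not_ge)]

theorem monic_finSuccEquiv_hsymm [CommSemiring R] (m j : ℕ) :
    (finSuccEquiv R m (hsymm (Fin (m + 1)) R j)).Monic :=
  Polynomial.monic_of_natDegree_le_of_coeff_eq_one j (natDegree_finSuccEquiv_hsymm_le m j)
    (by rw [coeff_finSuccEquiv_hsymm, if_pos le_rfl, Nat.sub_self, hsymm_zero])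

theorem natDegree_map_finSuccEquiv_hsymm [CommSemiring R] {Q : Type*} [Semiring Q]
    [Nontrivial Q] {m : ℕ} (q : MvPolynomial (Fin m) R →+* Q) (j : ℕ) :
    ((finSuccEquiv R m (hsymm (Fin (m + 1)) R j)).map q).natDegree = j := by
  refine Polynomial.natDegree_eq_of_le_of_coeff_ne_zero
    (Polynomial.natDegree_map_le.trans (natDegree_finSuccEquiv_hsymm_le m j)) ?_
  rw [Polynomial.coeff_map, coeff_finSuccEquiv_hsymm, if_pos le_rfl, Nat.sub_self, hsymm_zero,
    map_one]
  exact one_ne_zero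

theorem hsymm_eq_zero_of_isEmpty [CommSemiring R] {σ : Type*} [Fintype σ] [DecidableEq σ]
    [IsEmpty σ] {j : ℕ} (hj : j ≠ 0) : hsymm σ R j = 0 := by
  ext d
  rw [coeff_hsymm, Subsingleton.elim d 0, map_zero, if_neg (Ne.symm hj), coeff_zero]

theorem finSuccEquiv_prod_X_pow [CommSemiring R] {m : ℕ} (e : Fin (m + 1) → ℕ) :
    finSuccEquiv R m (∏ i, X i ^ e i) =
      Polynomial.X ^ e 0 * Polynomial.C (∏ i : Fin m, X i ^ e i.succ) := by
  rw [Fin.prod_univ_succ, map_mul, map_pow, finSuccEquiv_X_zero, map_prod]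
  simp_rw [map_pow, finSuccEquiv_X_succ, ← Polynomial.C_pow, ← map_prod]

section Quotient

variable [CommRing R] {m k : ℕ} {Q : Type*} [CommRing Q] (q : MvPolynomial (Fin m) R →+* Q)

theorem map_finSuccEquiv_hsymm_mem_span (hq : ∀ j, k + 1 < j → q (hsymm (Fin m) R j) = 0)
    {j : ℕ} (hj : k + 1 ≤ j) :
    (finSuccEquiv R m (hsymm (Fin (m + 1)) R j)).map q ∈
      Ideal.span {(finSuccEquiv R m (hsymm (Fin (m + 1)) R (k + 1))).map q} := by
  induction j, hj using Nat.le_induction with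
  | base => exact Ideal.mem_span_singleton_self _
  | succ j hj ih =>
    rw [finSuccEquiv_hsymm_succ m j, Polynomial.map_add, Polynomial.map_C, hq _ (by omega),
      Polynomial.C_0, zero_add, Polynomial.map_mul, Polynomial.map_X]
    exact Ideal.mul_mem_left _ _ ih

theorem prod_X_pow_notMem_span_hsymm_of_ringHom
    (hq : ∀ j, k + 1 < j → q (hsymm (Fin m) R j) = 0)
    (hM : q (∏ i : Fin m, X i ^ (k + 1 + i)) ≠ 0) :
    ∏ i : Fin (m + 1), (X i : MvPolynomial (Fin (m + 1)) R) ^ (k + i) ∉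
      Ideal.span (hsymm (Fin (m + 1)) R '' Set.Ici (k + 1)) := by
  have : Nontrivial Q := nontrivial_of_ne _ _ hM
  set P := (finSuccEquiv R m (hsymm (Fin (m + 1)) R (k + 1))).map q
  let Ψ := (Ideal.Quotient.mk (Ideal.span {P})).comp
    ((Polynomial.mapRingHom q).comp (finSuccEquiv R m).toRingHom)
  have hker : Ideal.span (hsymm (Fin (m + 1)) R '' Set.Ici (k + 1)) ≤ RingHom.ker Ψ := by
    refine Ideal.span_le.2 ?_
    rintro _ ⟨j, hj, rfl⟩
    exact Ideal.Quotient.eq_zero_iff_mem.2 (map_finSuccEquiv_hsymm_mem_span q hq hj)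
  intro hmem
  have hdvd : P ∣ Polynomial.C (q (∏ i : Fin m, X i ^ (k + 1 + i))) * Polynomial.X ^ k := by
    have hΨ : Ideal.Quotient.mk _ ((finSuccEquiv R m _).map q) = 0 := hker hmem
    rw [Ideal.Quotient.eq_zero_iff_mem, Ideal.mem_span_singleton, finSuccEquiv_prod_X_pow,
      Polynomial.map_mul, Polynomial.map_pow, Polynomial.map_X, Polynomial.map_C] at hΨ
    simpa only [Fin.val_zero, Fin.val_succ, add_zero, ← add_assoc, add_right_comm k _ 1,
      mul_comm] using hΨ
  refine ((monic_finSuccEquiv_hsymm m (k + 1)).map q).not_dvd_of_natDegree_lt ?_ ?_ hdvd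
  · rwa [Polynomial.C_mul_X_pow_eq_monomial, Ne, Polynomial.monomial_eq_zero_iff]
  · rw [Polynomial.natDegree_C_mul_X_pow k _ hM, natDegree_map_finSuccEquiv_hsymm]
    omega

end Quotient

theorem prod_X_pow_notMem_span_hsymm [CommRing R] [Nontrivial R] (ℓ k : ℕ) :
    ∏ i : Fin ℓ, (X i : MvPolynomial (Fin ℓ) R) ^ (k + i) ∉
      Ideal.span (hsymm (Fin ℓ) R '' Set.Ici (k + 1)) := by
  induction ℓ generalizing k with
  | zero =>
    have hspan : Ideal.span (hsymm (Fin 0) R '' Set.Ici (k + 1)) = ⊥ := by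
      rw [Ideal.span_eq_bot]
      rintro _ ⟨j, hj, rfl⟩
      exact hsymm_eq_zero_of_isEmpty (by simp at hj; omega)
    simp [hspan]
  | succ m ih =>
    refine prod_X_pow_notMem_span_hsymm_of_ringHom (Ideal.Quotient.mk _) (fun j hj => ?_)
      (fun h => ih (k + 1) (Ideal.Quotient.eq_zero_iff_mem.1 h))
    exact Ideal.Quotient.eq_zero_iff_mem.2 (Ideal.subset_span ⟨j, hj, rfl⟩)

theorem rename_mem_span_hsymm [CommSemiring R] {σ : Type*} [Fintype σ] [DecidableEq σ]
    (e : σ ≃ σ) {S : Set ℕ} {p : MvPolynomial σ R} (hp : p ∈ Ideal.span (hsymm σ R '' S)) :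
    rename e p ∈ Ideal.span (hsymm σ R '' S) := by
  have := Ideal.mem_map_of_mem (rename e) hp
  rwa [Ideal.map_span, Set.image_image, Set.image_congr fun j _ => rename_hsymm _ _ j e] at this

theorem prod_X_pow_sub_notMem_span_hsymm [CommRing R] [Nontrivial R] {n ℓ : ℕ} (hn : ℓ ≤ n) :
    ∏ i : Fin ℓ, (X i : MvPolynomial (Fin ℓ) R) ^ (n - (i + 1)) ∉
      Ideal.span (hsymm (Fin ℓ) R '' Set.Icc (n - ℓ + 1) n) := by
  refine fun hmem => prod_X_pow_notMem_span_hsymm (R := R) ℓ (n - ℓ) ?_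
  have hrev : rename Fin.revPerm (∏ i : Fin ℓ, (X i : MvPolynomial (Fin ℓ) R) ^ (n - (i + 1))) =
      ∏ i : Fin ℓ, X i ^ (n - ℓ + i) := by
    simp only [map_prod, map_pow, rename_X]
    refine Fintype.prod_equiv Fin.revPerm _ _ fun i => ?_
    rw [Fin.revPerm_apply, Fin.val_rev]
    congr 1
    omega
  exact hrev ▸ rename_mem_span_hsymm _
    (Ideal.span_mono (Set.image_mono Set.Icc_subset_Ici_self) hmem)

end MvPolynomial

theorem TensorProduct.tmul_ne_zero {R V W : Type*} [CommRing R] [NoZeroDivisors R]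
    [AddCommGroup V] [Module R V] [Module.Projective R V]
    [AddCommGroup W] [Module R W] [Module.Projective R W] {v : V} {w : W}
    (hv : v ≠ 0) (hw : w ≠ 0) : v ⊗ₜ[R] w ≠ 0 := by
  obtain ⟨f, hf⟩ := Module.Projective.exists_dual_ne_zero R hv
  obtain ⟨g, hg⟩ := Module.Projective.exists_dual_ne_zero R hw
  intro h
  apply mul_ne_zero hf hg
  simpa using congrArg (TensorProduct.lid R R ∘ TensorProduct.map f g) h

/-- `c0`, `c i`, `c' i` are the indices of `u₀`, `u_{χᵢ}`, `u_{χ₀⊗χᵢ}`, where `i : Fin ℓ` stands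
for `i + 1 ∈ {1,…,ℓ}`. -/
theorem tensor_product_element_nonzero_general (n ℓ : ℕ) (hn : ℓ ≤ n)
    (Gcirc : Type) (c0 : Gcirc) (c c' : Fin ℓ → Gcirc) :
    ((Ideal.Quotient.mk (Ideal.span {(Polynomial.X : Polynomial (ZMod 2)) ^ (n + 1)})
          (Polynomial.X ^ n)) ⊗ₜ[ZMod 2]
        (Ideal.Quotient.mk
          (Ideal.span ((fun j => hsymm (Fin ℓ) (ZMod 2) j) '' (Set.Icc (n - ℓ + 1) n)))
          (∏ i : Fin ℓ, (X i : MvPolynomial (Fin ℓ) (ZMod 2)) ^ (n - (i.1 + 1))))) ⊗ₜ[ZMod 2]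
      ((AddMonoidAlgebra.single
          (Finsupp.single c0 (n : ℤ) +
            ∑ i : Fin ℓ,
              (Finsupp.single (c' i) (1 : ℤ) +
                Finsupp.single (c i) ((n : ℤ) - (i.1 + 1) - 1)))
          (1 : ZMod 2)) :
        AddMonoidAlgebra (ZMod 2) (Gcirc →₀ ℤ)) ≠ 0 := by
  refine tmul_ne_zero (tmul_ne_zero ?_ ?_) ?_
  · rw [Ne, Ideal.Quotient.eq_zero_iff_mem, Ideal.mem_span_singleton, Polynomial.X_pow_dvd_iff]
    exact fun h => one_ne_zero ((Polynomial.coeff_X_pow_self n).symm.trans (h n n.lt_succ_self))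
  · rw [Ne, Ideal.Quotient.eq_zero_iff_mem]
    exact prod_X_pow_sub_notMem_span_hsymm hn
  · exact AddMonoidAlgebra.single_ne_zero.2 one_ne_zero

/-- In `A = 𝔽₂[x₀]/(x₀^{n+1}) ⊗ 𝔽₂[x₁,…,x_ℓ]/(f_{n−ℓ+1},…,f_n) ⊗ 𝔽₂[u_χ^{±1} : χ ∈ G°]`
(the last factor being the Laurent polynomial ring on a finite index set `G°`, modelled
as the group algebra of the free abelian group on `G°`), the element
`x₀^n · ∏ᵢ x_i^{n−i} · u_{χ₀⊗χᵢ} · u_{χᵢ}^{n−i−1} · u₀^n` is nonzero.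
Here `c0, c i, c' i ∈ G°` are the pairwise distinct indices of the units
`u₀ = u_{χ₀}`, `u_{χᵢ}`, `u_{χ₀⊗χᵢ}`, and `i : Fin ℓ` encodes `i + 1 ∈ {1,…,ℓ}`. -/
theorem tensor_product_element_nonzero (n ℓ : ℕ) (hℓ : 1 ≤ ℓ) (hn : ℓ ≤ n)
    (Gcirc : Type) [Fintype Gcirc] (c0 : Gcirc) (c c' : Fin ℓ → Gcirc)
    (hc : Function.Injective c) (hc' : Function.Injective c')
    (hcc' : ∀ i j, c i ≠ c' j) (hc0 : ∀ i, c0 ≠ c i) (hc0' : ∀ i, c0 ≠ c' i) :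
    ((Ideal.Quotient.mk (Ideal.span {(Polynomial.X : Polynomial (ZMod 2)) ^ (n + 1)})
          (Polynomial.X ^ n)) ⊗ₜ[ZMod 2]
        (Ideal.Quotient.mk
          (Ideal.span ((fun j => hsymm (Fin ℓ) (ZMod 2) j) '' (Set.Icc (n - ℓ + 1) n)))
          (∏ i : Fin ℓ, (X i : MvPolynomial (Fin ℓ) (ZMod 2)) ^ (n - (i.1 + 1))))) ⊗ₜ[ZMod 2]
      ((AddMonoidAlgebra.single
          (Finsupp.single c0 (n : ℤ) +
            ∑ i : Fin ℓ,
              (Finsupp.single (c' i) (1 : ℤ) +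
                Finsupp.single (c i) ((n : ℤ) - (i.1 + 1) - 1)))
          (1 : ZMod 2)) :
        AddMonoidAlgebra (ZMod 2) (Gcirc →₀ ℤ)) ≠ 0 :=
  tensor_product_element_nonzero_general n ℓ hn Gcirc c0 c c'
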